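/- Ginibre normalization: for every positive integer n, ∫_{ℂ^n} |Δ(z)|² · e^{−(|z_1|² + ... + |z_n|²)} dA(z_1)···dA(z_n) = π^n · Π_{k=1}^{n} k!, where the integral is over n copies of the complex plane with Lebesgue area measure and Δ(z) = Π_{1≤i<j≤n} (z_i − z_j). -/

import Mathlib

open scoped BigOperators

open MeasureTheory Real Set

/-- The Vandermonde determinant `Δ(z) = ∏_{i < j} (z_i - z_j)`. -/
noncomputable def vanderC {n : ℕ} (z : Fin n → ℂ) : ℂ :=
  ∏ p ∈ Finset.univ.filter (fun p : Fin n × Fin n => p.1 < p.2), (z p.1 - z p.2)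


noncomputable def gfun (a b : ℕ) (w : ℂ) : ℂ :=
  w ^ a * ((starRingEnd ℂ) w) ^ b * ((Real.exp (-‖w‖ ^ 2) : ℝ) : ℂ)

lemma gfun_continuous (a b : ℕ) : Continuous (gfun a b) := by
  unfold gfun
  apply Continuous.mul
  · exact (continuous_pow a).mul ((Complex.continuous_conj.pow b))
  · exact Complex.continuous_ofReal.comp (Real.continuous_exp.comp
      (Continuous.neg (continuous_norm.pow 2)))

lemma gfun_norm (a b : ℕ) (w : ℂ) :
    ‖gfun a b w‖ = ‖w‖ ^ (a + b) * Real.exp (-‖w‖ ^ 2) := by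
  unfold gfun
  simp only [norm_mul, norm_pow, Complex.norm_conj, Complex.norm_real, Real.norm_eq_abs,
    Real.abs_exp, pow_add]

lemma gfun_integrable (a b : ℕ) : Integrable (gfun a b) := by
  have h0 : Integrable (fun v : ℂ => Complex.exp (-(1/2 : ℂ) * ‖v‖^2 + 0 * (inner ℝ (0:ℂ) v : ℝ))) :=
    GaussianFourier.integrable_cexp_neg_mul_sq_norm_add (by norm_num) 0 0
  have h1 : Integrable (fun v : ℂ => Real.exp (-(1/2) * ‖v‖^2)) := by
    have h := h0.norm
    have heq : ∀ v : ℂ, ‖Complex.exp (-(1/2 : ℂ) * ‖v‖^2 + 0 * (inner ℝ (0:ℂ) v : ℝ))‖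
        = Real.exp (-(1/2) * ‖v‖^2) := by
      intro v
      rw [Complex.norm_exp]
      norm_num
      rw [← Complex.ofReal_pow, Complex.ofReal_re]
    simpa only [heq] using h
  refine Integrable.mono' (h1.const_mul (((a+b).factorial : ℝ) * Real.exp 1))
    (gfun_continuous a b).aestronglyMeasurable ?_
  filter_upwards with w
  have ht : (0:ℝ) ≤ ‖w‖ := norm_nonneg w
  rw [gfun_norm]
  have h2 : ‖w‖ ^ (a+b) ≤ ((a+b).factorial : ℝ) * Real.exp ‖w‖ := by
    have h := Real.pow_div_factorial_le_exp ‖w‖ ht (a+b)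
    have hf : (0:ℝ) < ((a+b).factorial : ℝ) := by positivity
    rw [div_le_iff₀ hf] at h
    linarith [h]
  have h3 : Real.exp ‖w‖ * Real.exp (-‖w‖^2) ≤ Real.exp 1 * Real.exp (-(1/2) * ‖w‖^2) := by
    rw [← Real.exp_add, ← Real.exp_add]
    apply Real.exp_le_exp.mpr
    nlinarith [sq_nonneg (‖w‖ - 1)]
  calc ‖w‖ ^ (a+b) * Real.exp (-‖w‖^2)
      ≤ (((a+b).factorial : ℝ) * Real.exp ‖w‖) * Real.exp (-‖w‖^2) :=
        mul_le_mul_of_nonneg_right h2 (Real.exp_pos _).le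
    _ = ((a+b).factorial : ℝ) * (Real.exp ‖w‖ * Real.exp (-‖w‖^2)) := by ring
    _ ≤ ((a+b).factorial : ℝ) * (Real.exp 1 * Real.exp (-(1/2) * ‖w‖^2)) :=
        mul_le_mul_of_nonneg_left h3 (by positivity)
    _ = ((a+b).factorial : ℝ) * Real.exp 1 * Real.exp (-(1/2) * ‖w‖^2) := by ring

lemma radial_integral (m : ℕ) :
    ∫ r in Ioi (0:ℝ), r ^ (m + 1) * Real.exp (-r^2)
      = 1/2 * Real.Gamma (((m:ℝ) + 2)/2) := by
  have h : ∫ r in Ioi (0:ℝ), r ^ (m + 1) * Real.exp (-r^2)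
      = ∫ r in Ioi (0:ℝ), r ^ (((m+1 : ℕ)) : ℝ) * Real.exp (-r ^ (2:ℝ)) := by
    refine setIntegral_congr_fun measurableSet_Ioi fun r _ => ?_
    rw [Real.rpow_natCast, show ((2:ℝ)) = (((2:ℕ)):ℝ) by norm_num, Real.rpow_natCast]
  rw [h, integral_rpow_mul_exp_neg_rpow two_pos (by push_cast; linarith)]
  push_cast
  ring_nf

lemma angular_integral_zero (m : ℤ) (hm : m ≠ 0) :
    ∫ θ in Ioo (-π) π, Complex.exp ((m : ℂ) * θ * Complex.I) = 0 := by
  have h1 : ∀ θ : ℝ, (m : ℂ) * θ * Complex.I = ((m : ℂ) * Complex.I) * θ := fun θ => by ring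
  simp_rw [h1]
  rw [← integral_Ioc_eq_integral_Ioo,
    ← intervalIntegral.integral_of_le (by linarith [Real.pi_pos] : -π ≤ π)]
  rw [integral_exp_mul_complex (by simp [hm] : (m : ℂ) * Complex.I ≠ 0)]
  have h2 : (m : ℂ) * Complex.I * π = m * (π * Complex.I) := by push_cast; ring
  have h3 : (m : ℂ) * Complex.I * ((-π : ℝ) : ℂ) = m * (-(π * Complex.I)) := by push_cast; ring
  rw [h2, h3, Complex.exp_int_mul, Complex.exp_int_mul, Complex.exp_neg, Complex.exp_pi_mul_I]
  norm_num

lemma angular_integral_const :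
    ∫ θ in Ioo (-π) π, (1 : ℂ) = ((2 * π : ℝ) : ℂ) := by
  rw [setIntegral_const]
  rw [measureReal_def, Real.volume_Ioo]
  rw [ENNReal.toReal_ofReal (by linarith [Real.pi_pos] : (0:ℝ) ≤ π - -π)]
  rw [Complex.real_smul]
  push_cast
  ring

lemma polar_eq (a b : ℕ) (p : ℝ × ℝ) (hr : 0 < p.1) :
    p.1 • gfun a b (Complex.polarCoord.symm p)
      = (((p.1 : ℝ) ^ (a+b+1) * Real.exp (-p.1^2) : ℝ) : ℂ)
        * Complex.exp ((((a:ℤ) - (b:ℤ) : ℤ) : ℂ) * p.2 * Complex.I) := by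
  obtain ⟨r, θ⟩ := p
  simp only at hr ⊢
  have hw : Complex.polarCoord.symm (r, θ) = (r : ℂ) * Complex.exp (θ * Complex.I) := by
    rw [Complex.polarCoord_symm_apply, Complex.exp_mul_I]
    simp [Complex.ofReal_cos, Complex.ofReal_sin]
  rw [hw]
  have habs : ‖(r:ℂ) * Complex.exp (θ * Complex.I)‖ = r := by
    rw [norm_mul, Complex.norm_exp, Complex.norm_real, Real.norm_eq_abs, abs_of_pos hr]
    simp
  have hconj : (starRingEnd ℂ) ((r:ℂ) * Complex.exp (θ * Complex.I))
      = (r:ℂ) * Complex.exp (-(θ * Complex.I)) := by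
    rw [map_mul, Complex.conj_ofReal, ← Complex.exp_conj]
    congr 1
    simp [Complex.conj_ofReal]
  unfold gfun
  rw [habs, hconj]
  have hexp : Complex.exp ((a:ℂ) * (θ * Complex.I)) * Complex.exp ((b:ℂ) * -(θ * Complex.I))
      = Complex.exp ((((a:ℤ) - (b:ℤ) : ℤ) : ℂ) * θ * Complex.I) := by
    rw [← Complex.exp_add]; congr 1; push_cast; ring
  rw [mul_pow, mul_pow, ← Complex.exp_nat_mul, ← Complex.exp_nat_mul, Complex.real_smul,
    ← hexp]
  push_cast
  ring

lemma gfun_integral (a b : ℕ) :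
    ∫ w : ℂ, gfun a b w = if a = b then ((π * a.factorial : ℝ) : ℂ) else 0 := by
  rw [← Complex.integral_comp_polarCoord_symm (gfun a b), polarCoord_target]
  have hs : MeasurableSet (Ioi (0:ℝ) ×ˢ Ioo (-π) π) :=
    measurableSet_Ioi.prod measurableSet_Ioo
  rw [setIntegral_congr_fun hs (fun p hp => polar_eq a b p hp.1)]
  rw [Measure.volume_eq_prod,
    setIntegral_prod_mul (f := fun r : ℝ => (((r : ℝ) ^ (a+b+1) * Real.exp (-r^2) : ℝ) : ℂ))
      (g := fun θ : ℝ => Complex.exp ((((a:ℤ) - (b:ℤ) : ℤ) : ℂ) * θ * Complex.I))]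
  have hrad : (∫ r in Ioi (0:ℝ), (((r : ℝ) ^ (a+b+1) * Real.exp (-r^2) : ℝ) : ℂ))
      = ((1/2 * Real.Gamma ((((a+b : ℕ) : ℝ) + 2)/2) : ℝ) : ℂ) := by
    have h0 : (∫ r in Ioi (0:ℝ), (((r:ℝ) ^ (a+b+1) * Real.exp (-r^2) : ℝ) : ℂ))
        = ((∫ r in Ioi (0:ℝ), r ^ (a+b+1) * Real.exp (-r^2) : ℝ) : ℂ) := integral_ofReal
    rw [h0, radial_integral (a+b)]
  rw [hrad]
  by_cases hab : a = b
  · subst hab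
    have hm : (((a:ℤ) - (a:ℤ) : ℤ) : ℂ) = 0 := by push_cast; ring
    simp_rw [hm, zero_mul, Complex.exp_zero]
    rw [angular_integral_const]
    simp only [if_true]
    rw [← Complex.ofReal_mul]
    congr 1
    have : ((a + a : ℕ) : ℝ) + 2 = 2 * ((a:ℝ) + 1) := by push_cast; ring
    rw [this, show (2 * ((a:ℝ)+1))/2 = (a:ℝ) + 1 by ring, Real.Gamma_nat_eq_factorial]
    ring
  · have hm : ((a:ℤ) - (b:ℤ)) ≠ 0 := by
      simpa [sub_eq_zero] using fun h => hab (Int.natCast_inj.mp h)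
    rw [angular_integral_zero _ hm, mul_zero, if_neg hab]

lemma prod_pairs {M : Type*} [CommMonoid M] {n : ℕ} (f : Fin n → Fin n → M) :
    ∏ p ∈ Finset.univ.filter (fun p : Fin n × Fin n => p.1 < p.2), f p.1 p.2
      = ∏ i, ∏ j ∈ Finset.Ioi i, f i j := by
  rw [Finset.prod_filter, ← Finset.univ_product_univ, Finset.prod_product]
  refine Finset.prod_congr rfl fun i _ => ?_
  have h : Finset.Ioi i = Finset.univ.filter (fun j => i < j) := by ext j; simp
  rw [h, Finset.prod_filter]

lemma fact_prod (n : ℕ) : (n.factorial : ℝ) * ∏ k ∈ Finset.range n, (k.factorial : ℝ)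
    = ∏ k ∈ Finset.range n, ((k+1).factorial : ℝ) := by
  induction n with
  | zero => simp
  | succ m ih =>
    rw [Finset.prod_range_succ, Finset.prod_range_succ, ← ih]
    push_cast [Nat.factorial_succ]
    ring


lemma vanderC_abs {n : ℕ} (z : Fin n → ℂ) :
    ‖vanderC z‖ = ‖(Matrix.vandermonde z).det‖ := by
  rw [Matrix.det_vandermonde]
  unfold vanderC
  simp only [norm_prod]
  rw [prod_pairs (f := fun i j => ‖z i - z j‖)]
  exact Finset.prod_congr rfl fun i _ => Finset.prod_congr rfl fun j _ =>
    norm_sub_rev _ _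

lemma vander_det {n : ℕ} (z : Fin n → ℂ) :
    (Matrix.vandermonde z).det
      = ∑ σ : Equiv.Perm (Fin n), ((Equiv.Perm.sign σ : ℤ) : ℂ) * ∏ i, z i ^ ((σ i : Fin n) : ℕ) := by
  rw [← Matrix.det_transpose, Matrix.det_apply']
  refine Finset.sum_congr rfl fun σ _ => ?_
  simp [Matrix.vandermonde, Matrix.transpose_apply]

lemma expand {n : ℕ} (z : Fin n → ℂ) :
    ((‖vanderC z‖ ^ 2 * Real.exp (-(∑ i, ‖z i‖ ^ 2)) : ℝ) : ℂ)
      = ∑ σ : Equiv.Perm (Fin n), ∑ τ : Equiv.Perm (Fin n),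
          (((Equiv.Perm.sign σ : ℤ) : ℂ) * ((Equiv.Perm.sign τ : ℤ) : ℂ))
            * ∏ i, gfun ((σ i : Fin n) : ℕ) ((τ i : Fin n) : ℕ) (z i) := by
  have hexp : ((Real.exp (-(∑ i, ‖z i‖ ^ 2)) : ℝ) : ℂ)
      = ∏ i, ((Real.exp (-(‖z i‖) ^ 2) : ℝ) : ℂ) := by
    rw [show -(∑ i, ‖z i‖ ^ 2) = ∑ i, -(‖z i‖ ^ 2) by
        rw [← Finset.sum_neg_distrib],
      Real.exp_sum, Complex.ofReal_prod]
  have habs2 : ((‖vanderC z‖ ^ 2 : ℝ) : ℂ)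
      = (Matrix.vandermonde z).det * (starRingEnd ℂ) ((Matrix.vandermonde z).det) := by
    rw [Complex.mul_conj, Complex.normSq_eq_norm_sq, vanderC_abs]
  rw [Complex.ofReal_mul, habs2, hexp, vander_det, map_sum]
  simp only [map_mul, map_prod, map_pow, map_intCast]
  rw [Finset.sum_mul_sum, Finset.sum_mul]
  refine Finset.sum_congr rfl fun σ _ => ?_
  rw [Finset.sum_mul]
  refine Finset.sum_congr rfl fun τ _ => ?_
  simp only [gfun]
  rw [Finset.prod_mul_distrib, Finset.prod_mul_distrib]
  ring

/-- **Ginibre normalization**: for every positive integer `n`,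
`∫_{ℂⁿ} |Δ(z)|² e^{-(|z_1|² + ⋯ + |z_n|²)} dA(z_1) ⋯ dA(z_n) = πⁿ ∏_{k=1}^n k!`,
the integral taken over `n` copies of the complex plane with Lebesgue area measure. -/
theorem ginibre_normalization (n : ℕ) (hn : 0 < n) :
    ∫ z : Fin n → ℂ,
        ‖vanderC z‖ ^ 2 * Real.exp (-(∑ i, ‖z i‖ ^ 2))
      = Real.pi ^ n * ∏ k ∈ Finset.range n, ((k + 1).factorial : ℝ) := by
  classical
  have key : ∫ z : Fin n → ℂ,
      ((‖vanderC z‖ ^ 2 * Real.exp (-(∑ i, ‖z i‖ ^ 2)) : ℝ) : ℂ)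
      = ((Real.pi ^ n * ∏ k ∈ Finset.range n, ((k + 1).factorial : ℝ) : ℝ) : ℂ) := by
    have hfe : (fun z : Fin n → ℂ =>
        ((‖vanderC z‖ ^ 2 * Real.exp (-(∑ i, ‖z i‖ ^ 2)) : ℝ) : ℂ))
        = fun z => ∑ σ : Equiv.Perm (Fin n), ∑ τ : Equiv.Perm (Fin n),
          (((Equiv.Perm.sign σ : ℤ) : ℂ) * ((Equiv.Perm.sign τ : ℤ) : ℂ))
            * ∏ i, gfun ((σ i : Fin n) : ℕ) ((τ i : Fin n) : ℕ) (z i) := funext expand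
    rw [hfe]
    have hint : ∀ σ τ : Equiv.Perm (Fin n), Integrable (fun z : Fin n → ℂ =>
        (((Equiv.Perm.sign σ : ℤ) : ℂ) * ((Equiv.Perm.sign τ : ℤ) : ℂ))
          * ∏ i, gfun ((σ i : Fin n) : ℕ) ((τ i : Fin n) : ℕ) (z i)) := fun σ τ =>
      Integrable.const_mul
        (Integrable.fintype_prod (f := fun i => gfun ((σ i : Fin n) : ℕ) ((τ i : Fin n) : ℕ))
          (fun i => gfun_integrable _ _)) _
    rw [integral_finset_sum _ (fun σ _ => integrable_finset_sum _ (fun τ _ => hint σ τ))]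
    calc ∑ σ : Equiv.Perm (Fin n), ∫ z : Fin n → ℂ, ∑ τ : Equiv.Perm (Fin n),
            (((Equiv.Perm.sign σ : ℤ) : ℂ) * ((Equiv.Perm.sign τ : ℤ) : ℂ))
              * ∏ i, gfun ((σ i : Fin n) : ℕ) ((τ i : Fin n) : ℕ) (z i)
        = ∑ σ : Equiv.Perm (Fin n), ∑ τ : Equiv.Perm (Fin n),
            (((Equiv.Perm.sign σ : ℤ) : ℂ) * ((Equiv.Perm.sign τ : ℤ) : ℂ))
              * ∫ z : Fin n → ℂ, ∏ i, gfun ((σ i : Fin n) : ℕ) ((τ i : Fin n) : ℕ) (z i) := by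
          refine Finset.sum_congr rfl fun σ _ => ?_
          rw [integral_finset_sum _ (fun τ _ => hint σ τ)]
          exact Finset.sum_congr rfl fun τ _ => integral_const_mul _ _
      _ = ∑ σ : Equiv.Perm (Fin n), ∑ τ : Equiv.Perm (Fin n),
            (((Equiv.Perm.sign σ : ℤ) : ℂ) * ((Equiv.Perm.sign τ : ℤ) : ℂ))
              * ∏ i, (if ((σ i : Fin n) : ℕ) = ((τ i : Fin n) : ℕ)
                  then ((Real.pi * ((σ i : Fin n) : ℕ).factorial : ℝ) : ℂ) else 0) := by
          refine Finset.sum_congr rfl fun σ _ => Finset.sum_congr rfl fun τ _ => ?_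
          rw [MeasureTheory.integral_fintype_prod_volume_eq_prod (ι := Fin n)
            (fun i => gfun ((σ i : Fin n) : ℕ) ((τ i : Fin n) : ℕ))]
          congr 1
          exact Finset.prod_congr rfl fun i _ => gfun_integral _ _
      _ = ∑ _σ : Equiv.Perm (Fin n), ∏ j : Fin n, ((Real.pi * (j : ℕ).factorial : ℝ) : ℂ) := by
          refine Finset.sum_congr rfl fun σ _ => ?_
          rw [Finset.sum_eq_single σ]
          · have hd : (∏ i, (if ((σ i : Fin n) : ℕ) = ((σ i : Fin n) : ℕ)
                then ((Real.pi * ((σ i : Fin n) : ℕ).factorial : ℝ) : ℂ) else 0))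
                = ∏ i, ((Real.pi * ((σ i : Fin n) : ℕ).factorial : ℝ) : ℂ) :=
              Finset.prod_congr rfl fun i _ => if_pos rfl
            rw [hd]
            have hsign : (((Equiv.Perm.sign σ : ℤ) : ℂ)) * (((Equiv.Perm.sign σ : ℤ) : ℂ)) = 1 := by
              have h2 : ((Equiv.Perm.sign σ : ℤ)) * ((Equiv.Perm.sign σ : ℤ)) = 1 := by
                rw [← Units.val_mul, Int.units_mul_self, Units.val_one]
              exact_mod_cast h2
            rw [hsign, one_mul]
            exact Equiv.prod_comp σ (fun j : Fin n => ((Real.pi * (j : ℕ).factorial : ℝ) : ℂ))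
          · intro τ _ hτ
            obtain ⟨i, hi⟩ : ∃ i, σ i ≠ τ i := by
              by_contra hno
              push_neg at hno
              exact hτ (Equiv.ext hno).symm
            have h0 : (∏ i, (if ((σ i : Fin n) : ℕ) = ((τ i : Fin n) : ℕ)
                then ((Real.pi * ((σ i : Fin n) : ℕ).factorial : ℝ) : ℂ) else 0)) = 0 :=
              Finset.prod_eq_zero (Finset.mem_univ i)
                (if_neg (fun h => hi (Fin.val_injective h)))
            rw [h0, mul_zero]
          · intro h; exact absurd (Finset.mem_univ σ) h
      _ = ((Real.pi ^ n * ∏ k ∈ Finset.range n, ((k + 1).factorial : ℝ) : ℝ) : ℂ) := by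
          rw [Finset.sum_const, Finset.card_univ, Fintype.card_perm, Fintype.card_fin,
            nsmul_eq_mul, ← Complex.ofReal_natCast, ← Complex.ofReal_prod, ← Complex.ofReal_mul]
          congr 1
          rw [Finset.prod_mul_distrib, Finset.prod_const, Finset.card_univ, Fintype.card_fin,
            Fin.prod_univ_eq_prod_range (fun k => ((k).factorial : ℝ)) n, ← fact_prod]
          ring
  have h2 : ((∫ z : Fin n → ℂ,
      ‖vanderC z‖ ^ 2 * Real.exp (-(∑ i, ‖z i‖ ^ 2)) : ℝ) : ℂ)
      = ((Real.pi ^ n * ∏ k ∈ Finset.range n, ((k + 1).factorial : ℝ) : ℝ) : ℂ) :=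
    integral_ofReal.symm.trans key
  exact_mod_cast h2
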